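/- arXiv:2401.15567 — 3 statements merged into one kernel-verified Lean document; each statement's English description precedes it below -/
import Mathlib

section
/- Let {Yₙ}_{n≥0} be a matrix submartingale adapted to a filtration {Fₙ} that is almost surely positive semidefinite at every time n, let N ∈ ℕ, and let A be a d×d symmetric positive definite matrix. Writing E for the event { ∃ n ≤ N : Yₙ ⋠ A }, we have P(E) ≤ tr( E[ Y_N · 1_E ] · A⁻¹ ) ≤ tr( E[Y_N] · A⁻¹ ). -/
/-!
Put `X n = tr (Y n * A⁻¹)`. Since `tr (P * B) ≥ 0` for `P, B ⪰ 0`, the scalar process `X` is a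
nonnegative submartingale. Writing `M ⪰ 0` as a sum of rank-one matrices `v vᵀ` and applying
Cauchy–Schwarz for the inner product given by `A⁻¹` to `(v ⬝ x)² = (v ⬝ A⁻¹ (A x))²` gives
`M ⪯ tr (M * A⁻¹) • A`; hence `X n ≥ 1` wherever `Y n ⋠ A`. Splitting the event according to the
first `n ≤ N` with `Y n ⋠ A` yields pieces `Eₙ ∈ ℱ n`, so that
`μ Eₙ ≤ ∫_{Eₙ} X n ≤ ∫_{Eₙ} X N`; summing over `n` gives the first inequality, and the second is
`X N ≥ 0` off the event.
-/

open MeasureTheory ProbabilityTheory Matrix Filter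

noncomputable section

/-- Measurable space structure on matrices (entrywise). -/
instance matMS (d : ℕ) : MeasurableSpace (Matrix (Fin d) (Fin d) ℝ) :=
  inferInstanceAs (MeasurableSpace (Fin d → Fin d → ℝ))

/-- Loewner order: `A ⪯ B` iff `B - A` is positive semidefinite. -/
def LoewnerLE {d : ℕ} (A B : Matrix (Fin d) (Fin d) ℝ) : Prop := (B - A).PosSemidef

/-- Entrywise expectation of a random matrix. -/
def matExpect {Ω : Type*} {_ : MeasurableSpace Ω} {d : ℕ} (μ : Measure Ω)
    (X : Ω → Matrix (Fin d) (Fin d) ℝ) : Matrix (Fin d) (Fin d) ℝ :=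
  Matrix.of fun i j => ∫ ω, X ω i j ∂μ

/-- Entrywise conditional expectation of a random matrix. -/
def matCondExp {Ω : Type*} {m0 : MeasurableSpace Ω} {d : ℕ} (μ : Measure Ω)
    (m : MeasurableSpace Ω) (X : Ω → Matrix (Fin d) (Fin d) ℝ) : Ω → Matrix (Fin d) (Fin d) ℝ :=
  fun ω => Matrix.of fun i j => (μ[fun ω' => X ω' i j | m]) ω

/-- Spectral functional calculus for real symmetric matrices: apply `f` to the eigenvalues. -/
def matCFC {d : ℕ} (f : ℝ → ℝ) (X : Matrix (Fin d) (Fin d) ℝ) : Matrix (Fin d) (Fin d) ℝ :=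
  if hX : X.IsHermitian then
    (hX.eigenvectorUnitary : Matrix (Fin d) (Fin d) ℝ) *
      Matrix.diagonal (fun i => f (hX.eigenvalues i)) *
      star (hX.eigenvectorUnitary : Matrix (Fin d) (Fin d) ℝ)
  else 0

/-- Positive semidefinite square root (via the spectral calculus). -/
def matSqrt {d : ℕ} (X : Matrix (Fin d) (Fin d) ℝ) : Matrix (Fin d) (Fin d) ℝ :=
  matCFC Real.sqrt X

/-- Matrix absolute value of a symmetric matrix. -/
def matAbs {d : ℕ} (X : Matrix (Fin d) (Fin d) ℝ) : Matrix (Fin d) (Fin d) ℝ :=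
  matCFC (fun x => |x|) X

/-- Real power of a symmetric (positive (semi)definite) matrix. -/
def matRPow {d : ℕ} (p : ℝ) (X : Matrix (Fin d) (Fin d) ℝ) : Matrix (Fin d) (Fin d) ℝ :=
  matCFC (fun x => x ^ p) X

/-- Matrix logarithm of a positive definite matrix. -/
def matLog {d : ℕ} (X : Matrix (Fin d) (Fin d) ℝ) : Matrix (Fin d) (Fin d) ℝ :=
  matCFC Real.log X

/-- Matrix exponential. -/
def matExpMat {d : ℕ} (X : Matrix (Fin d) (Fin d) ℝ) : Matrix (Fin d) (Fin d) ℝ :=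
  NormedSpace.exp X

/-- Largest eigenvalue of a symmetric matrix. -/
def lamMax {d : ℕ} (X : Matrix (Fin d) (Fin d) ℝ) : ℝ :=
  if hX : X.IsHermitian then ⨆ i, hX.eigenvalues i else 0

/-- Operator (spectral) norm: the largest absolute value of an eigenvalue. -/
def specNorm {d : ℕ} (X : Matrix (Fin d) (Fin d) ℝ) : ℝ :=
  if hX : X.IsHermitian then ⨆ i, |hX.eigenvalues i| else 0

/-- A random positive semidefinite matrix `U` is trace super-uniform if
`P(U ⋡ Y) ≤ tr Y` for every positive semidefinite `Y`. -/
def TraceSuperUniform {Ω : Type*} {_ : MeasurableSpace Ω} {d : ℕ} (μ : Measure Ω)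
    (U : Ω → Matrix (Fin d) (Fin d) ℝ) : Prop :=
  ∀ Y : Matrix (Fin d) (Fin d) ℝ, Y.PosSemidef →
    μ {ω | ¬ LoewnerLE Y (U ω)} ≤ ENNReal.ofReal Y.trace

/-- Matrix supermartingale: adapted, symmetric, entrywise integrable, and
`E(Y (n+1) | ℱ n) ⪯ Y n` a.s. for every `n`. -/
def IsMatrixSupermartingale {Ω : Type*} {m0 : MeasurableSpace Ω} {d : ℕ}
    (ℱ : Filtration ℕ m0) (μ : Measure Ω) (Y : ℕ → Ω → Matrix (Fin d) (Fin d) ℝ) : Prop :=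
  (∀ n ω, (Y n ω).IsHermitian) ∧
  (∀ n i j, StronglyMeasurable[ℱ n] fun ω => Y n ω i j) ∧
  (∀ n i j, Integrable (fun ω => Y n ω i j) μ) ∧
  (∀ n, ∀ᵐ ω ∂μ, LoewnerLE (matCondExp μ (ℱ n) (Y (n + 1)) ω) (Y n ω))

/-- Matrix submartingale: adapted, symmetric, entrywise integrable, and
`E(Y (n+1) | ℱ n) ⪰ Y n` a.s. for every `n`. -/
def IsMatrixSubmartingale {Ω : Type*} {m0 : MeasurableSpace Ω} {d : ℕ}
    (ℱ : Filtration ℕ m0) (μ : Measure Ω) (Y : ℕ → Ω → Matrix (Fin d) (Fin d) ℝ) : Prop :=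
  (∀ n ω, (Y n ω).IsHermitian) ∧
  (∀ n i j, StronglyMeasurable[ℱ n] fun ω => Y n ω i j) ∧
  (∀ n i j, Integrable (fun ω => Y n ω i j) μ) ∧
  (∀ n, ∀ᵐ ω ∂μ, LoewnerLE (Y n ω) (matCondExp μ (ℱ n) (Y (n + 1)) ω))

/-- Exchangeability of a sequence of random matrices: any finitely supported permutation
of the indices leaves the joint law invariant. -/
def MatExchangeable {Ω : Type*} {_ : MeasurableSpace Ω} {d : ℕ} (μ : Measure Ω)
    (X : ℕ → Ω → Matrix (Fin d) (Fin d) ℝ) : Prop :=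
  ∀ σ : Equiv.Perm ℕ, {n | σ n ≠ n}.Finite →
    Measure.map (fun ω n => X (σ n) ω) μ = Measure.map (fun ω n => X n ω) μ

section LoewnerOrder

variable {n : Type*} [Fintype n]

namespace Matrix

lemma PosSemidef.sq_dotProduct_mulVec_le {B : Matrix n n ℝ} (hB : B.PosSemidef) (x y : n → ℝ) :
    (x ⬝ᵥ B *ᵥ y) ^ 2 ≤ (x ⬝ᵥ B *ᵥ x) * (y ⬝ᵥ B *ᵥ y) := by
  let _ := B.toSeminormedAddCommGroup hB
  let _ := B.toInnerProductSpace hB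
  have h : (B *ᵥ y) ⬝ᵥ star x * ((B *ᵥ y) ⬝ᵥ star x) ≤
      ((B *ᵥ x) ⬝ᵥ star x) * ((B *ᵥ y) ⬝ᵥ star y) := real_inner_mul_inner_self_le x y
  simp only [star_trivial] at h
  rwa [dotProduct_comm x, dotProduct_comm x, dotProduct_comm y, sq]

lemma trace_sum_vecMulVec_mul {m : ℕ} (v : Fin m → n → ℝ) (B : Matrix n n ℝ) :
    ((∑ i, vecMulVec (v i) (star (v i))) * B).trace = ∑ i, v i ⬝ᵥ B *ᵥ v i := by
  simp only [Finset.sum_mul, trace_sum, vecMulVec_mul, trace_vecMulVec, star_trivial,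
    dotProduct_comm _ (v _ ᵥ* B), dotProduct_mulVec]

lemma PosSemidef.trace_mul_nonneg {M B : Matrix n n ℝ} (hM : M.PosSemidef) (hB : B.PosSemidef) :
    0 ≤ (M * B).trace := by
  obtain ⟨m, v, rfl⟩ := posSemidef_iff_eq_sum_vecMulVec.mp hM
  rw [trace_sum_vecMulVec_mul]
  exact Finset.sum_nonneg fun i _ => by simpa using hB.dotProduct_mulVec_nonneg (v i)

lemma PosSemidef.dotProduct_mulVec_le_trace_mul_inv_mul [DecidableEq n] {M A : Matrix n n ℝ}
    (hM : M.PosSemidef) (hA : A.PosDef) (x : n → ℝ) :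
    x ⬝ᵥ M *ᵥ x ≤ (M * A⁻¹).trace * (x ⬝ᵥ A *ᵥ x) := by
  obtain ⟨m, v, rfl⟩ := posSemidef_iff_eq_sum_vecMulVec.mp hM
  have hinv : A⁻¹ *ᵥ (A *ᵥ x) = x := by
    rw [mulVec_mulVec, nonsing_inv_mul _ ((isUnit_iff_isUnit_det A).mp hA.isUnit), one_mulVec]
  have hsymm : A *ᵥ x ⬝ᵥ x = x ⬝ᵥ A *ᵥ x := by
    rw [← vecMul_transpose, ← conjTranspose_eq_transpose_of_trivial, hA.isHermitian.eq,
      dotProduct_comm]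
  have hcs (i : Fin m) : (x ⬝ᵥ v i) ^ 2 ≤ (v i ⬝ᵥ A⁻¹ *ᵥ v i) * (x ⬝ᵥ A *ᵥ x) := by
    have h := hA.inv.posSemidef.sq_dotProduct_mulVec_le (v i) (A *ᵥ x)
    rwa [hinv, hsymm, dotProduct_comm] at h
  rw [trace_sum_vecMulVec_mul, Finset.sum_mul, sum_mulVec, dotProduct_sum]
  refine Finset.sum_le_sum fun i _ => ?_
  simpa [vecMulVec_mulVec, dotProduct_comm x, sq] using hcs i

lemma isClosed_setOf_posSemidef : IsClosed {M : Matrix n n ℝ | M.PosSemidef} := by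
  simp only [posSemidef_iff_dotProduct_mulVec, Set.ofPred_and, Set.ofPred_forall]
  refine (isClosed_eq (by fun_prop) continuous_id).inter
    (isClosed_iInter fun x => isClosed_le continuous_const ?_)
  exact continuous_const.dotProduct (continuous_id.matrix_mulVec continuous_const)

end Matrix

end LoewnerOrder

section LoewnerLE

variable {d : ℕ}

lemma Matrix.PosSemidef.loewnerLE_trace_mul_inv_smul {M A : Matrix (Fin d) (Fin d) ℝ}
    (hM : M.PosSemidef) (hA : A.PosDef) : LoewnerLE M ((M * A⁻¹).trace • A) := by
  refine .of_dotProduct_mulVec_nonneg ((hA.isHermitian.smul (.all _)).sub hM.isHermitian)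
    fun x => ?_
  simp only [star_trivial, sub_mulVec, smul_mulVec, dotProduct_sub, dotProduct_smul, smul_eq_mul]
  linarith [hM.dotProduct_mulVec_le_trace_mul_inv_mul hA x]

lemma one_le_trace_mul_inv_of_not_loewnerLE {M A : Matrix (Fin d) (Fin d) ℝ} (hM : M.PosSemidef)
    (hA : A.PosDef) (h : ¬ LoewnerLE M A) : 1 ≤ (M * A⁻¹).trace := by
  by_contra! ht
  have hsplit : A - M = (1 - (M * A⁻¹).trace) • A + ((M * A⁻¹).trace • A - M) := by
    rw [sub_smul, one_smul, sub_add_sub_cancel]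
  apply h
  rw [LoewnerLE, hsplit]
  exact (hA.posSemidef.smul (by linarith)).add (hM.loewnerLE_trace_mul_inv_smul hA)

instance : BorelSpace (Matrix (Fin d) (Fin d) ℝ) := inferInstanceAs (BorelSpace (Fin d → Fin d → ℝ))

lemma measurableSet_setOf_loewnerLE {Ω : Type*} {m : MeasurableSpace Ω}
    {X : Ω → Matrix (Fin d) (Fin d) ℝ} (hX : ∀ i j, Measurable fun ω => X ω i j)
    (A : Matrix (Fin d) (Fin d) ℝ) : MeasurableSet {ω | LoewnerLE (X ω) A} := by
  have hX' : Measurable fun ω => A - X ω :=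
    measurable_pi_lambda _ fun i => measurable_pi_lambda _ fun j => measurable_const.sub (hX i j)
  exact hX' Matrix.isClosed_setOf_posSemidef.measurableSet

end LoewnerLE

section RandomMatrix

variable {Ω : Type*} {m0 : MeasurableSpace Ω} {d : ℕ} {X : Ω → Matrix (Fin d) (Fin d) ℝ}

lemma Matrix.trace_mul_eq_sum (M C : Matrix (Fin d) (Fin d) ℝ) :
    (M * C).trace = ∑ i, ∑ j, C j i * M i j := by
  simp only [trace, diag_apply, mul_apply, mul_comm]

lemma integrable_trace_mul {ν : Measure Ω} (hX : ∀ i j, Integrable (fun ω => X ω i j) ν)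
    (C : Matrix (Fin d) (Fin d) ℝ) : Integrable (fun ω => (X ω * C).trace) ν := by
  simp only [Matrix.trace_mul_eq_sum]
  exact integrable_finsetSum _ fun i _ => integrable_finsetSum _ fun j _ => (hX i j).const_mul _

lemma integral_trace_mul {ν : Measure Ω} (hX : ∀ i j, Integrable (fun ω => X ω i j) ν)
    (C : Matrix (Fin d) (Fin d) ℝ) : ∫ ω, (X ω * C).trace ∂ν = (matExpect ν X * C).trace := by
  simp only [Matrix.trace_mul_eq_sum, matExpect, Matrix.of_apply]
  rw [integral_finsetSum _ fun i _ => integrable_finsetSum _ fun j _ => (hX i j).const_mul _]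
  refine Finset.sum_congr rfl fun i _ => ?_
  rw [integral_finsetSum _ fun j _ => (hX i j).const_mul _]
  exact Finset.sum_congr rfl fun j _ => integral_const_mul _ _

lemma condExp_trace_mul {μ : Measure Ω} (m : MeasurableSpace Ω)
    (hX : ∀ i j, Integrable (fun ω => X ω i j) μ) (C : Matrix (Fin d) (Fin d) ℝ) :
    μ[fun ω => (X ω * C).trace | m] =ᵐ[μ] fun ω => (matCondExp μ m X ω * C).trace := by
  have hsum (Z : Ω → Matrix (Fin d) (Fin d) ℝ) :
      (fun ω => (Z ω * C).trace) = ∑ i, ∑ j, C j i • fun ω => Z ω i j := by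
    ext ω
    simp [Matrix.trace_mul_eq_sum]
  rw [hsum, hsum]
  refine (condExp_finsetSum (fun i _ => integrable_finsetSum' _ fun j _ => (hX i j).smul (C j i))
    m).trans (eventuallyEq_sum fun i _ => ?_)
  refine (condExp_finsetSum (fun j _ => (hX i j).smul (C j i)) m).trans
    (eventuallyEq_sum fun j _ => ?_)
  exact condExp_smul (C j i) (fun ω => X ω i j) m

lemma IsMatrixSubmartingale.submartingale_trace_mul {μ : Measure Ω} [IsFiniteMeasure μ]
    {ℱ : Filtration ℕ m0} {Y : ℕ → Ω → Matrix (Fin d) (Fin d) ℝ} (hY : IsMatrixSubmartingale ℱ μ Y)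
    {C : Matrix (Fin d) (Fin d) ℝ} (hC : C.PosSemidef) :
    Submartingale (fun n ω => (Y n ω * C).trace) ℱ μ := by
  obtain ⟨-, hadapted, hint, hsub⟩ := hY
  refine submartingale_nat (fun n => ?_) (fun n => integrable_trace_mul (hint n) C) fun n => ?_
  · simp only [Matrix.trace_mul_eq_sum]
    exact Finset.stronglyMeasurable_fun_sum _ fun i _ =>
      Finset.stronglyMeasurable_fun_sum _ fun j _ => (hadapted n i j).const_mul _
  · filter_upwards [hsub n, condExp_trace_mul (ℱ n) (hint (n + 1)) C] with ω hω hcond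
    rw [hcond]
    have h := Matrix.PosSemidef.trace_mul_nonneg hω hC
    rwa [Matrix.sub_mul, Matrix.trace_sub, sub_nonneg] at h

end RandomMatrix

lemma MeasureTheory.Submartingale.mul_measureReal_biUnion_le_setIntegral {Ω : Type*}
    {m0 : MeasurableSpace Ω} {μ : Measure Ω} [IsFiniteMeasure μ] {ℱ : Filtration ℕ m0}
    {X : ℕ → Ω → ℝ} (hX : Submartingale X ℱ μ) {G : ℕ → Set Ω}
    (hG : ∀ n, MeasurableSet[ℱ n] (G n)) {c : ℝ} (hXG : ∀ n, ∀ᵐ ω ∂μ, ω ∈ G n → c ≤ X n ω)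
    (N : ℕ) : c * μ.real (⋃ n ≤ N, G n) ≤ ∫ ω in ⋃ n ≤ N, G n, X N ω ∂μ := by
  have hE (n : ℕ) : MeasurableSet[ℱ n] (disjointed G n) := by
    rw [disjointed_eq_inter_compl]
    exact (hG n).inter (.iInter fun k => .iInter fun hk => (ℱ.mono hk.le _ (hG k)).compl)
  have hE₀ (n : ℕ) : MeasurableSet (disjointed G n) := ℱ.le n _ (hE n)
  have hdisj : Set.PairwiseDisjoint ↑(Finset.Iic N) (disjointed G) :=
    fun a _ b _ hab => disjoint_disjointed G hab
  have hunion : ⋃ n ≤ N, G n = ⋃ n ∈ Finset.Iic N, disjointed G n := by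
    rw [biUnion_Iic_disjointed, partialSups_eq_biSup]
    simp
  rw [hunion, measureReal_biUnion_finset hdisj fun n _ => hE₀ n,
    integral_biUnion_finset _ (fun n _ => hE₀ n) hdisj fun n _ => (hX.integrable N).integrableOn,
    Finset.mul_sum]
  refine Finset.sum_le_sum fun n hn => ?_
  calc c * μ.real (disjointed G n) = ∫ _ in disjointed G n, c ∂μ := by simp [mul_comm]
    _ ≤ ∫ ω in disjointed G n, X n ω ∂μ := by
      refine setIntegral_mono_ae_restrict integrableOn_const (hX.integrable n).integrableOn ?_
      refine (ae_restrict_iff' (hE₀ n)).mpr ?_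
      filter_upwards [hXG n] with ω hω hωE using hω (disjointed_subset G n hωE)
    _ ≤ ∫ ω in disjointed G n, X N ω ∂μ := hX.setIntegral_le (Finset.mem_Iic.mp hn) (hE n)

/-- **Matrix Doob's inequality.**
For an a.s. positive semidefinite matrix submartingale `Y`, `N ∈ ℕ`, `A ≻ 0`, and the event
`Ev = {∃ n ≤ N, Yₙ ⋠ A}`:
`P(Ev) ≤ tr( E[Y_N 1_Ev] A⁻¹ ) ≤ tr( E[Y_N] A⁻¹ )`. -/
theorem stmt14 {Ω : Type*} {m0 : MeasurableSpace Ω} (μ : Measure Ω) [IsProbabilityMeasure μ]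
    {d : ℕ} (ℱ : Filtration ℕ m0)
    (Y : ℕ → Ω → Matrix (Fin d) (Fin d) ℝ)
    (hY : IsMatrixSubmartingale ℱ μ Y)
    (hpos : ∀ n, ∀ᵐ ω ∂μ, (Y n ω).PosSemidef)
    (N : ℕ) (A : Matrix (Fin d) (Fin d) ℝ) (hA : A.PosDef) :
    ∀ Ev : Set Ω, Ev = {ω | ∃ n ≤ N, ¬ LoewnerLE (Y n ω) A} →
      ∀ Z : Matrix (Fin d) (Fin d) ℝ,
        Z = Matrix.of (fun i j => ∫ ω, Ev.indicator (fun ω' => Y N ω' i j) ω ∂μ) →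
        μ Ev ≤ ENNReal.ofReal ((Z * A⁻¹).trace) ∧
          (Z * A⁻¹).trace ≤ (matExpect μ (Y N) * A⁻¹).trace := by
  intro Ev hEv Z hZ
  obtain ⟨-, hadapted, hint, -⟩ := id hY
  set G : ℕ → Set Ω := fun n => {ω | ¬LoewnerLE (Y n ω) A}
  have hG (n : ℕ) : MeasurableSet[ℱ n] (G n) :=
    (measurableSet_setOf_loewnerLE (fun i j => (hadapted n i j).measurable) A).compl
  have hEvG : Ev = ⋃ n ≤ N, G n := by
    rw [hEv]
    ext
    simp [G]
  have hEvm : MeasurableSet Ev :=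
    hEvG ▸ .biUnion (Set.to_countable _) fun n _ => ℱ.le n _ (hG n)
  have hZ_trace : (Z * A⁻¹).trace = ∫ ω in Ev, (Y N ω * A⁻¹).trace ∂μ := by
    rw [integral_trace_mul (fun i j => (hint N i j).restrict), hZ]
    congr
    ext i j
    simp [integral_indicator hEvm]
  have hX := hY.submartingale_trace_mul hA.inv.posSemidef
  have hdoob := hX.mul_measureReal_biUnion_le_setIntegral hG (c := 1)
    (fun n => (hpos n).mono fun ω hω => one_le_trace_mul_inv_of_not_loewnerLE hω hA) N
  rw [← hEvG, one_mul, ← hZ_trace] at hdoob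
  refine ⟨ofReal_measureReal (μ := μ) (s := Ev) ▸ ENNReal.ofReal_le_ofReal hdoob, ?_⟩
  rw [hZ_trace, ← integral_trace_mul (hint N)]
  exact setIntegral_le_integral (integrable_trace_mul (hint N) _)
    ((hpos N).mono fun ω hω => hω.trace_mul_nonneg hA.inv.posSemidef)
end
end

section
/- Let {Gₙ}_{n≥0} be a backward filtration (G₀ ⊇ G₁ ⊇ G₂ ⊇ …) and let {Yₙ}_{n≥0} be a backward matrix submartingale adapted to it that is almost surely positive semidefinite at every time n. Then for any d×d symmetric positive definite matrix A, P( ∃ n ≥ 0 : Yₙ ⋠ A ) ≤ tr( E[Y₀] · A⁻¹ ). -/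
/-!
Put `Zₙ = tr(Yₙ A⁻¹)`. If `Yₙ ⪰ 0` and `Yₙ ⋠ A`, then `S = A^{-1/2} Yₙ A^{-1/2}` is positive
semidefinite with `S ⋠ 1`, so its largest eigenvalue, and hence its trace `Zₙ`, exceeds `1`.
Since `A⁻¹ ⪰ 0`, the trace pairing with `A⁻¹` is monotone in the Loewner order and commutes with
entrywise conditional expectation, so `(Zₙ)` is a real backward submartingale. Read backwards on
`{0, …, N}` it is a forward submartingale, and Doob's maximal inequality for its positive part gives
`P(∃ n ≤ N, Zₙ ≥ 1) ≤ E[Z₀] = tr(E[Y₀] A⁻¹)`; let `N → ∞`.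
-/

open MeasureTheory ProbabilityTheory Matrix Filter

noncomputable section

open scoped MatrixOrder NNReal ENNReal

namespace Matrix

lemma trace_mul_eq_sum_s15 {n : Type*} [Fintype n] (M C : Matrix n n ℝ) :
    (M * C).trace = ∑ p : n × n, C p.2 p.1 * M p.1 p.2 := by
  simp [trace, mul_apply, Fintype.sum_prod_type, mul_comm]

variable {n : Type*} [Fintype n] [DecidableEq n]

lemma PosSemidef.le_trace_smul_one {S : Matrix n n ℝ} (hS : S.PosSemidef) :
    S ≤ S.trace • (1 : Matrix n n ℝ) := by
  rw [← Algebra.algebraMap_eq_smul_one, le_algebraMap_iff_spectrum_le hS.1.isSelfAdjoint,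
    hS.1.spectrum_real_eq_range_eigenvalues, hS.1.trace_eq_sum_eigenvalues]
  rintro _ ⟨i, rfl⟩
  exact Finset.single_le_sum (fun j _ => hS.eigenvalues_nonneg j) (Finset.mem_univ i)

lemma PosSemidef.trace_mul_nonneg_s15 {P Q : Matrix n n ℝ} (hP : P.PosSemidef) (hQ : Q.PosSemidef) :
    0 ≤ (P * Q).trace := by
  have hR : (CFC.sqrt P)ᴴ = CFC.sqrt P := (nonneg_iff_posSemidef.mp (CFC.sqrt_nonneg P)).1
  have h := (hQ.mul_mul_conjTranspose_same (CFC.sqrt P)).trace_nonneg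
  rwa [hR, trace_mul_cycle, CFC.sqrt_mul_sqrt_self P hP.nonneg] at h

lemma trace_mul_le_trace_mul_of_le {P Q R : Matrix n n ℝ} (hPQ : P ≤ Q) (hR : R.PosSemidef) :
    (P * R).trace ≤ (Q * R).trace := by
  have h := (le_iff.mp hPQ).trace_mul_nonneg_s15 hR
  rwa [Matrix.sub_mul, trace_sub, sub_nonneg] at h

lemma PosSemidef.le_of_trace_mul_inv_le_one {Y A : Matrix n n ℝ} (hY : Y.PosSemidef)
    (hA : A.PosDef) (h : (Y * A⁻¹).trace ≤ 1) : Y ≤ A := by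
  set B := CFC.sqrt A
  have hBH : Bᴴ = B := (nonneg_iff_posSemidef.mp (CFC.sqrt_nonneg A)).1
  have hBB : B * B = A := CFC.sqrt_mul_sqrt_self A hA.posSemidef.nonneg
  have hdet : IsUnit B.det := (isUnit_iff_isUnit_det B).mp <|
    isUnit_of_mul_isUnit_left (hBB ▸ hA.isUnit)
  set S := B⁻¹ * Y * B⁻¹
  have hS : S.PosSemidef := by
    simpa only [conjTranspose_nonsing_inv, hBH] using hY.mul_mul_conjTranspose_same B⁻¹
  have htr : S.trace = (Y * A⁻¹).trace := by
    rw [← hBB, Matrix.mul_inv_rev, trace_mul_cycle, trace_mul_comm]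
  have hS1 : S ≤ 1 := calc
    S ≤ S.trace • (1 : Matrix n n ℝ) := hS.le_trace_smul_one
    _ ≤ (1 : ℝ) • (1 : Matrix n n ℝ) := smul_le_smul_of_nonneg_right (htr ▸ h) zero_le_one
    _ = 1 := one_smul _ _
  have hAY : A - Y = B * (1 - S) * Bᴴ := by
    simp only [hBH, S, Matrix.mul_sub, Matrix.sub_mul, Matrix.mul_one, hBB, ← Matrix.mul_assoc,
      mul_nonsing_inv _ hdet, Matrix.one_mul]
    rw [Matrix.mul_assoc, nonsing_inv_mul _ hdet, Matrix.mul_one]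
  rw [le_iff, hAY]
  exact (le_iff.mp hS1).mul_mul_conjTranspose_same B

end Matrix

section RandomMatrix

variable {Ω : Type*} {m0 : MeasurableSpace Ω} {μ : Measure Ω} {d : ℕ}
  {X : Ω → Matrix (Fin d) (Fin d) ℝ} (C : Matrix (Fin d) (Fin d) ℝ)

lemma trace_mul_const_eq_sum :
    (fun ω => (X ω * C).trace) = ∑ p : Fin d × Fin d, C p.2 p.1 • fun ω => X ω p.1 p.2 := by
  ext ω
  simp [trace_mul_eq_sum_s15]

lemma stronglyMeasurable_trace_mul_const {m : MeasurableSpace Ω}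
    (hX : ∀ i j, StronglyMeasurable[m] fun ω => X ω i j) :
    StronglyMeasurable[m] fun ω => (X ω * C).trace := by
  rw [trace_mul_const_eq_sum]
  exact Finset.stronglyMeasurable_sum _ fun p _ => (hX p.1 p.2).const_smul _

variable (hX : ∀ i j, Integrable (fun ω => X ω i j) μ)
include hX

lemma integrable_trace_mul_const : Integrable (fun ω => (X ω * C).trace) μ := by
  rw [trace_mul_const_eq_sum]
  exact integrable_finsetSum' _ fun p _ => (hX p.1 p.2).smul (C p.2 p.1)

lemma integral_trace_mul_const :
    ∫ ω, (X ω * C).trace ∂μ = (matExpect μ X * C).trace := by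
  simp_rw [trace_mul_eq_sum_s15]
  rw [integral_finsetSum _ fun p _ => (hX p.1 p.2).const_mul (C p.2 p.1)]
  simp [matExpect, integral_const_mul]

lemma condExp_trace_mul_const (m : MeasurableSpace Ω) :
    μ[fun ω => (X ω * C).trace | m] =ᵐ[μ] fun ω => (matCondExp μ m X ω * C).trace := by
  have hsmul : ∀ᵐ ω ∂μ, ∀ p : Fin d × Fin d,
      μ[C p.2 p.1 • fun ω => X ω p.1 p.2 | m] ω = C p.2 p.1 * μ[fun ω => X ω p.1 p.2 | m] ω :=
    ae_all_iff.mpr fun p => condExp_smul _ _ m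
  rw [trace_mul_const_eq_sum]
  filter_upwards [condExp_finsetSum (s := Finset.univ)
    (fun (p : Fin d × Fin d) _ => (hX p.1 p.2).smul (C p.2 p.1)) m, hsmul] with ω hsum hsmul
  rw [hsum, Finset.sum_apply, trace_mul_eq_sum_s15]
  exact Finset.sum_congr rfl fun p _ => hsmul p

end RandomMatrix

namespace MeasureTheory

variable {Ω : Type*} {m0 : MeasurableSpace Ω} {μ : Measure Ω} {G : ℕ → MeasurableSpace Ω}

def Filtration.reverse (hGle : ∀ n, G n ≤ m0) (hGanti : Antitone G) (N : ℕ) :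
    Filtration ℕ m0 where
  seq k := G (N - k)
  mono' _ _ hij := hGanti (Nat.sub_le_sub_left hij N)
  le' _ := hGle _

variable [IsFiniteMeasure μ] {Z : ℕ → Ω → ℝ} (hGle : ∀ n, G n ≤ m0) (hGanti : Antitone G)
  (hZ : ∀ n, StronglyMeasurable[G n] (Z n)) (hint : ∀ n, Integrable (Z n) μ)
  (hsub : ∀ n, Z (n + 1) ≤ᵐ[μ] μ[Z n | G (n + 1)])
include hGle hGanti hZ hint hsub

theorem submartingale_reverse_of_backward (N : ℕ) :
    Submartingale (fun k => Z (N - k)) (Filtration.reverse hGle hGanti N) μ := by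
  refine submartingale_nat (fun k => hZ (N - k)) (fun k => hint (N - k)) fun k => ?_
  change Z (N - k) ≤ᵐ[μ] μ[Z (N - (k + 1)) | G (N - k)]
  rcases lt_or_ge k N with hk | hk
  · obtain ⟨n, hn⟩ : ∃ n, N - k = n + 1 := ⟨N - (k + 1), by omega⟩
    rw [hn, show N - (k + 1) = n by omega]
    exact hsub n
  · rw [Nat.sub_eq_zero_of_le hk, Nat.sub_eq_zero_of_le (by omega),
      condExp_of_stronglyMeasurable (hGle 0) (hZ 0) (hint 0)]

theorem backward_maximal_ineq_of_le (ε : ℝ≥0) (N : ℕ) :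
    ε * μ {ω | ∃ n ≤ N, (ε : ℝ) ≤ Z n ω} ≤ ENNReal.ofReal (∫ ω, (Z 0 ω)⁺ ∂μ) := by
  set f := (fun k => Z (N - k))⁺
  have hf := (submartingale_reverse_of_backward hGle hGanti hZ hint hsub N).pos
  set S := {ω | (ε : ℝ) ≤ (Finset.range (N + 1)).sup' Finset.nonempty_range_add_one fun k => f k ω}
  have hsubset : {ω | ∃ n ≤ N, (ε : ℝ) ≤ Z n ω} ⊆ S := by
    rintro ω ⟨n, hn, hεn⟩
    refine le_trans ?_ (Finset.le_sup' (fun k => f k ω)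
      (Finset.mem_range.mpr (by omega : N - n < N + 1)))
    simpa [f, Nat.sub_sub_self hn] using hεn.trans (le_posPart _)
  calc ε * μ {ω | ∃ n ≤ N, (ε : ℝ) ≤ Z n ω} ≤ ε * μ S := by gcongr
    _ ≤ ENNReal.ofReal (∫ ω in S, f N ω ∂μ) := maximal_ineq hf (fun _ _ => posPart_nonneg _) N
    _ ≤ ENNReal.ofReal (∫ ω, (Z 0 ω)⁺ ∂μ) := by
      gcongr
      simpa [f] using setIntegral_le_integral (hf.integrable N)
        (Eventually.of_forall fun _ => posPart_nonneg _)

theorem backward_maximal_ineq (ε : ℝ≥0) :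
    ε * μ {ω | ∃ n, (ε : ℝ) ≤ Z n ω} ≤ ENNReal.ofReal (∫ ω, (Z 0 ω)⁺ ∂μ) := by
  have hunion : {ω | ∃ n, (ε : ℝ) ≤ Z n ω} = ⋃ N, {ω | ∃ n ≤ N, (ε : ℝ) ≤ Z n ω} := by
    ext ω
    simp only [Set.mem_iUnion]
    exact ⟨fun ⟨n, h⟩ => ⟨n, n, le_rfl, h⟩, fun ⟨_, n, _, h⟩ => ⟨n, h⟩⟩
  have hmono : Monotone fun N => {ω | ∃ n ≤ N, (ε : ℝ) ≤ Z n ω} :=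
    fun _ _ hNM _ ⟨n, hn, h⟩ => ⟨n, hn.trans hNM, h⟩
  rw [hunion, hmono.measure_iUnion, ENNReal.mul_iSup]
  exact iSup_le (backward_maximal_ineq_of_le hGle hGanti hZ hint hsub ε)

end MeasureTheory

theorem stmt15_general {Ω : Type*} {m0 : MeasurableSpace Ω} (μ : Measure Ω) [IsProbabilityMeasure μ]
    {d : ℕ} (G : ℕ → MeasurableSpace Ω)
    (hGle : ∀ n, G n ≤ m0) (hGanti : Antitone G)
    (Y : ℕ → Ω → Matrix (Fin d) (Fin d) ℝ)
    (hmeas : ∀ n i j, StronglyMeasurable[G n] fun ω => Y n ω i j)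
    (hint : ∀ n i j, Integrable (fun ω => Y n ω i j) μ)
    (hpos : ∀ n, ∀ᵐ ω ∂μ, (Y n ω).PosSemidef)
    (hsub : ∀ n, ∀ᵐ ω ∂μ, LoewnerLE (Y (n + 1) ω) (matCondExp μ (G (n + 1)) (Y n) ω))
    (A : Matrix (Fin d) (Fin d) ℝ) (hA : A.PosDef) :
    μ {ω | ∃ n, ¬ LoewnerLE (Y n ω) A} ≤
      ENNReal.ofReal ((matExpect μ (Y 0) * A⁻¹).trace) := by
  set Z : ℕ → Ω → ℝ := fun n ω => (Y n ω * A⁻¹).trace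
  have hAinv : A⁻¹.PosSemidef := hA.inv.posSemidef
  have hZsub : ∀ n, Z (n + 1) ≤ᵐ[μ] μ[Z n | G (n + 1)] := fun n => by
    filter_upwards [hsub n, condExp_trace_mul_const A⁻¹ (hint n) (G (n + 1))] with ω hle hce
    rw [hce]
    exact trace_mul_le_trace_mul_of_le hle hAinv
  have hville := backward_maximal_ineq hGle hGanti
    (fun n => stronglyMeasurable_trace_mul_const A⁻¹ (hmeas n))
    (fun n => integrable_trace_mul_const A⁻¹ (hint n)) hZsub 1
  have hZ0 : ∫ ω, (Z 0 ω)⁺ ∂μ = (matExpect μ (Y 0) * A⁻¹).trace := by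
    rw [← integral_trace_mul_const A⁻¹ (hint 0)]
    refine integral_congr_ae ((hpos 0).mono fun ω hω => ?_)
    exact posPart_eq_self.mpr (hω.trace_mul_nonneg_s15 hAinv)
  have hsubset : {ω | ∃ n, ¬ LoewnerLE (Y n ω) A} ≤ᵐ[μ] {ω | ∃ n, 1 ≤ Z n ω} := by
    filter_upwards [ae_all_iff.mpr hpos] with ω hω ⟨n, hn⟩
    exact ⟨n, (not_le.mp fun h => hn ((hω n).le_of_trace_mul_inv_le_one hA h)).le⟩
  simp only [ENNReal.coe_one, NNReal.coe_one, one_mul] at hville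
  exact (measure_mono_ae hsubset).trans (hZ0 ▸ hville)

/-- **Matrix backward Ville's inequality.**
Let `{Gₙ}` be a backward filtration and `{Yₙ}` an adapted backward matrix submartingale
(`E(Yₙ | G_{n+1}) ⪰ Y_{n+1}` a.s.) that is a.s. positive semidefinite at every time. Then for
any `A ≻ 0`: `P( ∃ n, Yₙ ⋠ A ) ≤ tr( E[Y₀] A⁻¹ )`. -/
theorem stmt15 {Ω : Type*} {m0 : MeasurableSpace Ω} (μ : Measure Ω) [IsProbabilityMeasure μ]
    {d : ℕ} (G : ℕ → MeasurableSpace Ω)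
    (hGle : ∀ n, G n ≤ m0) (hGanti : Antitone G)
    (Y : ℕ → Ω → Matrix (Fin d) (Fin d) ℝ)
    (hsymm : ∀ n ω, (Y n ω).IsHermitian)
    (hmeas : ∀ n i j, StronglyMeasurable[G n] fun ω => Y n ω i j)
    (hint : ∀ n i j, Integrable (fun ω => Y n ω i j) μ)
    (hpos : ∀ n, ∀ᵐ ω ∂μ, (Y n ω).PosSemidef)
    (hsub : ∀ n, ∀ᵐ ω ∂μ, LoewnerLE (Y (n + 1) ω) (matCondExp μ (G (n + 1)) (Y n) ω))
    (A : Matrix (Fin d) (Fin d) ℝ) (hA : A.PosDef) :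
    μ {ω | ∃ n, ¬ LoewnerLE (Y n ω) A} ≤
      ENNReal.ofReal ((matExpect μ (Y 0) * A⁻¹).trace) :=
  stmt15_general μ G hGle hGanti Y hmeas hint hpos hsub A hA

end
end

section
/- Let p ≥ 1 and let {Xₙ}_{n≥1} be an exchangeable sequence of random d×d real symmetric matrices with common mean M = E[X₁] and central p-th moment V_p := E[ (abs(X₁ − M))^p ] with integrable entries. Then for any a > 0, writing X̄ₙ = (X₁ + ⋯ + Xₙ)/n, P( ∃ n ≥ 1 : ‖X̄ₙ − M‖_op ≥ a ) ≤ P( ∃ n ≥ 1 : tr( (abs(X̄ₙ − M))^p ) ≥ a^p ) ≤ a^{−p} tr( V_p ). -/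
open MeasureTheory ProbabilityTheory Matrix Filter

noncomputable section

/-!
If `‖X̄ₙ - M‖_op ≥ a`, some eigenvalue of `X̄ₙ - M` has modulus at least `a`, so
`tr |X̄ₙ - M|^p ≥ a^p`. Since `f = |·|^p` is convex, so is `A ↦ tr f(A)` (Peierls–Jensen: `f` of a
diagonal entry of `Uᵀ A U` is at most the same diagonal entry of `Uᵀ f(A) U`), hence
`tr |X̄ₙ - M|^p` is at most the running average of the nonnegative exchangeable scalars
`Wᵢ = tr |Xᵢ - M|^p`, whose mean is `tr V_p`. What remains is the maximal inequality
`t · P(∃ n, W̄ₙ ≥ t) ≤ E W₀`, proved as Garsia proves the maximal ergodic lemma: that proof only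
needs stationarity of `(Wᵢ)` on finite windows, which exchangeability provides through a cyclic
permutation of the first indices.
-/

instance matBorelSpace (d : ℕ) : BorelSpace (Matrix (Fin d) (Fin d) ℝ) :=
  inferInstanceAs (BorelSpace (Fin d → Fin d → ℝ))

open Finset Polynomial
open scoped ENNReal

lemma convexOn_abs_rpow {p : ℝ} (hp : 1 ≤ p) : ConvexOn ℝ Set.univ fun x : ℝ => |x| ^ p := by
  have himage : (fun x : ℝ => |x|) '' Set.univ = Set.Ici 0 :=
    Set.ext fun y => ⟨by rintro ⟨x, -, rfl⟩; exact abs_nonneg x,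
      fun hy => ⟨y, trivial, abs_of_nonneg hy⟩⟩
  refine ConvexOn.comp (g := fun x : ℝ => x ^ p) ?_ (convexOn_norm convex_univ) ?_
  · rw [himage]; exact convexOn_rpow hp
  · rw [himage]; exact Real.monotoneOn_rpow_Ici_of_exponent_nonneg (by linarith)

lemma exists_polynomial_tendsto {f : ℝ → ℝ} (hf : Continuous f) :
    ∃ q : ℕ → ℝ[X], ∀ x, Tendsto (fun k => (q k).eval x) atTop (nhds (f x)) := by
  choose q hq using fun k : ℕ => exists_polynomial_near_of_continuousOn (-k) k f
    hf.continuousOn (1 / (k + 1)) (by positivity)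
  refine ⟨q, fun x => tendsto_iff_norm_sub_tendsto_zero.2 ?_⟩
  refine squeeze_zero' (Eventually.of_forall fun _ => norm_nonneg _) ?_
    tendsto_one_div_add_atTop_nhds_zero_nat
  filter_upwards [eventually_ge_atTop ⌈|x|⌉₊] with k hk
  have hxk : |x| ≤ k := (Nat.le_ceil _).trans (by exact_mod_cast hk)
  exact (hq k x (abs_le.1 hxk)).le

lemma isHermitian_sum_smul {m ι : Type*} {s : Finset ι} {w : ι → ℝ} {A : ι → Matrix m m ℝ}
    (hA : ∀ i ∈ s, (A i).IsHermitian) :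
    (∑ i ∈ s, w i • A i).IsHermitian :=
  isSelfAdjoint_sum s fun i hi => (IsSelfAdjoint.all (w i)).smul (hA i hi).isSelfAdjoint

lemma inv_smul_sum_sub {𝕜 E : Type*} [DivisionRing 𝕜] [CharZero 𝕜] [AddCommGroup E] [Module 𝕜 E]
    {n : ℕ} (hn : n ≠ 0) (A : ℕ → E) (M : E) :
    (n : 𝕜)⁻¹ • ∑ i ∈ range n, A i - M = ∑ i ∈ range n, (n : 𝕜)⁻¹ • (A i - M) := by
  rw [← smul_sum, sum_sub_distrib, sum_const, card_range, smul_sub, ← Nat.cast_smul_eq_nsmul 𝕜,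
    smul_smul, inv_mul_cancel₀ (Nat.cast_ne_zero.2 hn), one_smul]

lemma isHermitian_inv_smul_sum_sub {m : Type*} {n : ℕ} {A : ℕ → Matrix m m ℝ}
    (hA : ∀ i, (A i).IsHermitian) {M : Matrix m m ℝ} (hM : M.IsHermitian) :
    ((n : ℝ)⁻¹ • ∑ i ∈ range n, A i - M).IsHermitian :=
  ((IsSelfAdjoint.all _).smul (isSelfAdjoint_sum _ fun i _ => (hA i).isSelfAdjoint)).sub hM

section SpectralCalculus

variable {d : ℕ} {A : Matrix (Fin d) (Fin d) ℝ}

lemma matCFC_eq_cfc (f : ℝ → ℝ) (hA : A.IsHermitian) : matCFC f A = cfc f A := by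
  rw [matCFC, dif_pos hA, hA.cfc_eq, IsHermitian.cfc, Unitary.conjStarAlgAut_apply]
  rfl

lemma trace_matCFC (f : ℝ → ℝ) (hA : A.IsHermitian) :
    (matCFC f A).trace = ∑ i, f (hA.eigenvalues i) := by
  rw [matCFC, dif_pos hA, trace_mul_cycle, Unitary.coe_star_mul_self, one_mul, trace_diagonal]

lemma trace_matCFC_of_not_isHermitian (f : ℝ → ℝ) (hA : ¬ A.IsHermitian) :
    (matCFC f A).trace = 0 := by
  rw [matCFC, dif_neg hA, trace_zero]

lemma trace_aeval_eq_sum (q : ℝ[X]) (hA : A.IsHermitian) :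
    (aeval A q).trace = ∑ i, q.eval (hA.eigenvalues i) := by
  rw [← cfc_polynomial q A hA.isSelfAdjoint, ← matCFC_eq_cfc _ hA, trace_matCFC]

lemma measurableSet_isHermitian : MeasurableSet {A : Matrix (Fin d) (Fin d) ℝ | A.IsHermitian} :=
  (isClosed_eq continuous_id.matrix_conjTranspose continuous_id).measurableSet

lemma measurable_trace_matCFC {f : ℝ → ℝ} (hf : Continuous f) :
    Measurable fun A : Matrix (Fin d) (Fin d) ℝ => (matCFC f A).trace := by
  obtain ⟨q, hq⟩ := exists_polynomial_tendsto hf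
  refine measurable_of_tendsto_metrizable' atTop
    (f := fun k A => if A.IsHermitian then (aeval A (q k)).trace else 0)
    (fun k => Measurable.ite measurableSet_isHermitian
      (q k).continuous_aeval.matrix_trace.measurable measurable_const)
    (tendsto_pi_nhds.2 fun A => ?_)
  by_cases hA : A.IsHermitian
  · simp only [if_pos hA, trace_aeval_eq_sum _ hA, trace_matCFC f hA]
    exact tendsto_finsetSum _ fun i _ => hq _
  · simp only [if_neg hA, trace_matCFC_of_not_isHermitian f hA, tendsto_const_nhds]

end SpectralCalculus

section Jensen

variable {d : ℕ} {f : ℝ → ℝ}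

lemma mul_diagonal_mul_star_apply_self {n : Type*} [Fintype n] [DecidableEq n]
    (W : Matrix n n ℝ) (c : n → ℝ) (k : n) :
    (W * diagonal c * star W) k k = ∑ j, W k j ^ 2 * c j := by
  rw [mul_apply]
  refine sum_congr rfl fun j _ => ?_
  rw [mul_diagonal, star_apply, star_trivial]
  ring

lemma star_mul_matCFC_mul {A : Matrix (Fin d) (Fin d) ℝ} (hA : A.IsHermitian)
    (U : Matrix (Fin d) (Fin d) ℝ) (g : ℝ → ℝ) :
    star U * matCFC g A * U = (star U * hA.eigenvectorUnitary) *
      diagonal (fun j => g (hA.eigenvalues j)) * star (star U * hA.eigenvectorUnitary) := by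
  simp only [matCFC, dif_pos hA, star_mul, star_star, mul_assoc]

lemma matCFC_id {A : Matrix (Fin d) (Fin d) ℝ} (hA : A.IsHermitian) : matCFC id A = A := by
  rw [matCFC_eq_cfc _ hA, cfc_id ℝ A hA.isSelfAdjoint]

lemma ConvexOn.map_diag_conj_le (hf : ConvexOn ℝ Set.univ f) {A U : Matrix (Fin d) (Fin d) ℝ}
    (hA : A.IsHermitian) (hU : star U * U = 1) (k : Fin d) :
    f ((star U * A * U) k k) ≤ (star U * matCFC f A * U) k k := by
  set W := star U * (hA.eigenvectorUnitary : Matrix (Fin d) (Fin d) ℝ)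
  have hV : (hA.eigenvectorUnitary : Matrix (Fin d) (Fin d) ℝ) *
      star (hA.eigenvectorUnitary : Matrix (Fin d) (Fin d) ℝ) = 1 :=
    Unitary.coe_mul_star_self _
  have hW : W * star W = 1 := by
    rw [star_mul, star_star, mul_assoc, ← mul_assoc _ _ U, hV, one_mul, hU]
  have hrow : ∑ j, W k j ^ 2 = 1 := by
    simpa [diagonal_one, hW] using (mul_diagonal_mul_star_apply_self W 1 k).symm
  conv_lhs => rw [← matCFC_id hA]
  rw [star_mul_matCFC_mul hA, star_mul_matCFC_mul hA, mul_diagonal_mul_star_apply_self,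
    mul_diagonal_mul_star_apply_self]
  simpa using hf.map_sum_le (t := univ) (fun j _ => sq_nonneg (W k j)) hrow
    (fun j _ => Set.mem_univ (hA.eigenvalues j))

lemma trace_mul_mul_of_mul_eq_one {n R : Type*} [Fintype n] [DecidableEq n] [CommSemiring R]
    {U V : Matrix n n R} (h : U * V = 1) (C : Matrix n n R) : (V * C * U).trace = C.trace := by
  rw [trace_mul_cycle, h, Matrix.one_mul]

theorem ConvexOn.trace_matCFC_sum_smul_le (hf : ConvexOn ℝ Set.univ f) {ι : Type*}
    {s : Finset ι} {w : ι → ℝ} (hw₀ : ∀ i ∈ s, 0 ≤ w i) (hw₁ : ∑ i ∈ s, w i = 1)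
    {A : ι → Matrix (Fin d) (Fin d) ℝ} (hA : ∀ i ∈ s, (A i).IsHermitian) :
    (matCFC f (∑ i ∈ s, w i • A i)).trace ≤ ∑ i ∈ s, w i * (matCFC f (A i)).trace := by
  have hB := isHermitian_sum_smul (w := w) hA
  set U := (hB.eigenvectorUnitary : Matrix (Fin d) (Fin d) ℝ)
  have hUU : star U * U = 1 := Unitary.coe_star_mul_self _
  have heig : ∀ k, hB.eigenvalues k = ∑ i ∈ s, w i * (star U * A i * U) k k := by
    intro k
    have := star_mul_matCFC_mul hB U id
    rw [matCFC_id hB, hUU, one_mul, star_one, mul_one] at this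
    simpa [Matrix.mul_sum, Matrix.sum_mul, Matrix.sum_apply] using
      (congrFun (congrFun this k) k).symm
  calc (matCFC f (∑ i ∈ s, w i • A i)).trace
      = ∑ k, f (∑ i ∈ s, w i * (star U * A i * U) k k) := by
        rw [trace_matCFC f hB]; simp only [heig]
    _ ≤ ∑ k, ∑ i ∈ s, w i * f ((star U * A i * U) k k) := by
        gcongr with k
        simpa using hf.map_sum_le hw₀ hw₁ fun i _ => Set.mem_univ _
    _ ≤ ∑ k, ∑ i ∈ s, w i * (star U * matCFC f (A i) * U) k k := by
        gcongr with k _ i hi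
        · exact hw₀ i hi
        · exact hf.map_diag_conj_le (hA i hi) hUU k
    _ = ∑ i ∈ s, w i * (matCFC f (A i)).trace := by
        rw [sum_comm]
        refine sum_congr rfl fun i _ => ?_
        rw [← mul_sum, ← trace_mul_mul_of_mul_eq_one (Unitary.coe_mul_star_self _)]
        rfl

theorem ConvexOn.trace_matCFC_inv_smul_sum_sub_le (hf : ConvexOn ℝ Set.univ f) {n : ℕ}
    (hn : n ≠ 0) {A : ℕ → Matrix (Fin d) (Fin d) ℝ} (hA : ∀ i, (A i).IsHermitian)
    {M : Matrix (Fin d) (Fin d) ℝ} (hM : M.IsHermitian) :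
    (matCFC f ((n : ℝ)⁻¹ • ∑ i ∈ range n, A i - M)).trace ≤
      (n : ℝ)⁻¹ * ∑ i ∈ range n, (matCFC f (A i - M)).trace := by
  rw [inv_smul_sum_sub hn, mul_sum]
  refine hf.trace_matCFC_sum_smul_le (fun _ _ => by positivity) ?_ fun i _ => (hA i).sub hM
  rw [sum_const, card_range, nsmul_eq_mul, mul_inv_cancel₀ (Nat.cast_ne_zero.2 hn)]

end Jensen

section Excess

variable (t : ℝ) (N : ℕ) (x : ℕ → ℝ)

def excess (n : ℕ) : ℝ := ∑ i ∈ range n, x i - n * t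

/-- The term `n = 0` contributes `excess t x 0 = 0`, so this is the positive part of the running
maximum of `∑ i < n, x i - n t` over `1 ≤ n ≤ N`, the quantity in Garsia's proof. -/
def maxExcess : ℝ := (range (N + 1)).sup' nonempty_range_add_one (excess t x)

variable {t N x}

lemma excess_zero : excess t x 0 = 0 := by simp [excess]

lemma excess_succ (n : ℕ) : excess t x (n + 1) = x 0 - t + excess t (fun i => x (i + 1)) n := by
  simp only [excess, sum_range_succ', Nat.cast_succ]
  ring

lemma excess_le_maxExcess {n : ℕ} (hn : n ≤ N) : excess t x n ≤ maxExcess t N x :=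
  le_sup' (excess t x) (mem_range.2 (Nat.lt_succ_of_le hn))

lemma maxExcess_nonneg : 0 ≤ maxExcess t N x :=
  excess_zero (t := t) (x := x) ▸ excess_le_maxExcess (Nat.zero_le N)

lemma maxExcess_congr {y : ℕ → ℝ} (h : ∀ i < N, x i = y i) : maxExcess t N x = maxExcess t N y :=
  sup'_congr _ rfl fun n hn => by
    rw [excess, excess, sum_congr rfl fun i hi => h i (by simp at hn hi; omega)]

lemma maxExcess_le_sum (ht : 0 ≤ t) (hx : ∀ i, 0 ≤ x i) :
    maxExcess t N x ≤ ∑ i ∈ range N, x i :=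
  sup'_le _ _ fun n hn => by
    have : ∑ i ∈ range n, x i ≤ ∑ i ∈ range N, x i :=
      sum_le_sum_of_subset_of_nonneg (range_subset_range.2 (by simp at hn; omega))
        fun i _ _ => hx i
    simp only [excess]
    nlinarith [(Nat.cast_nonneg n : (0 : ℝ) ≤ n)]

lemma maxExcess_le_of_exists (h : ∃ n, 1 ≤ n ∧ n ≤ N ∧ n * t ≤ ∑ i ∈ range n, x i) :
    maxExcess t N x ≤ x 0 - t + maxExcess t N (fun i => x (i + 1)) := by
  have hsucc : ∀ m < N, excess t x (m + 1) ≤ x 0 - t + maxExcess t N (fun i => x (i + 1)) :=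
    fun m hm => by rw [excess_succ]; gcongr; exact excess_le_maxExcess hm.le
  obtain ⟨n, hn₁, hnN, hn⟩ := h
  refine sup'_le _ _ fun m hm => ?_
  rcases m with _ | m
  · obtain ⟨k, rfl⟩ : ∃ k, n = k + 1 := ⟨n - 1, by omega⟩
    calc excess t x 0 = 0 := excess_zero
      _ ≤ excess t x (k + 1) := by simp only [excess]; linarith
      _ ≤ _ := hsucc k hnN
  · exact hsucc m (by simp at hm; omega)

lemma maxExcess_eq_zero_of_not_exists (h : ¬ ∃ n, 1 ≤ n ∧ n ≤ N ∧ n * t ≤ ∑ i ∈ range n, x i) :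
    maxExcess t N x = 0 := by
  push Not at h
  refine le_antisymm (sup'_le _ _ fun m hm => ?_) maxExcess_nonneg
  rcases Nat.eq_zero_or_pos m with rfl | hm₀
  · exact excess_zero.le
  · simp only [excess]
    linarith [h m hm₀ (by simp at hm; omega)]

end Excess

section Exchangeable

variable {Ω β : Type*} {m0 : MeasurableSpace Ω} [MeasurableSpace β] {μ : Measure Ω}
  {Y : ℕ → Ω → β}

def Exchangeable (μ : Measure Ω) (Y : ℕ → Ω → β) : Prop :=
  ∀ σ : Equiv.Perm ℕ, {n | σ n ≠ n}.Finite →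
    Measure.map (fun ω n => Y (σ n) ω) μ = Measure.map (fun ω n => Y n ω) μ

lemma exists_perm_eq_succ (N : ℕ) :
    ∃ σ : Equiv.Perm ℕ, {n | σ n ≠ n}.Finite ∧ ∀ n < N, σ n = n + 1 := by
  let σ := (finRotate (N + 1)).extendDomain (Fin.equivSubtype (n := N + 1))
  refine ⟨σ, (Set.finite_lt_nat (N + 1)).subset fun n hn => ?_, fun n hn => ?_⟩
  · by_contra h
    exact hn (Equiv.Perm.extendDomain_apply_not_subtype _ _ h)
  · rw [Equiv.Perm.extendDomain_apply_subtype (b := n) _ _ (by omega : n < N + 1)]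
    exact coe_finRotate_of_ne_last (i := ⟨n, by omega⟩) (Fin.ne_of_lt (Fin.mk_lt_mk.2 hn))

lemma Exchangeable.lintegral_comp_perm (hY : Exchangeable μ Y) (hmeas : ∀ n, Measurable (Y n))
    {σ : Equiv.Perm ℕ} (hσ : {n | σ n ≠ n}.Finite)
    {H : (ℕ → β) → ℝ≥0∞} (hH : Measurable H) :
    ∫⁻ ω, H (fun n => Y (σ n) ω) ∂μ = ∫⁻ ω, H (fun n => Y n ω) ∂μ := by
  rw [← lintegral_map hH (measurable_pi_lambda _ fun n => hmeas (σ n)), hY σ hσ,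
    lintegral_map hH (measurable_pi_lambda _ hmeas)]

lemma Exchangeable.lintegral_comp_eq (hY : Exchangeable μ Y) (hmeas : ∀ n, Measurable (Y n))
    (i : ℕ) {g : β → ℝ≥0∞} (hg : Measurable g) :
    ∫⁻ ω, g (Y i ω) ∂μ = ∫⁻ ω, g (Y 0 ω) ∂μ := by
  have hσ : {n | Equiv.swap 0 i n ≠ n}.Finite := (Set.toFinite {0, i}).subset fun n hn => by
    by_contra h
    simp only [Set.mem_insert_iff, Set.mem_singleton_iff, not_or] at h
    exact hn (Equiv.swap_apply_of_ne_of_ne h.1 h.2)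
  simpa using hY.lintegral_comp_perm hmeas hσ (hg.comp (measurable_pi_apply 0))

lemma Exchangeable.lintegral_comp_shift (hY : Exchangeable μ Y) (hmeas : ∀ n, Measurable (Y n))
    {N : ℕ} {H : (ℕ → β) → ℝ≥0∞} (hH : Measurable H)
    (hHN : ∀ x y : ℕ → β, (∀ n < N, x n = y n) → H x = H y) :
    ∫⁻ ω, H (fun n => Y (n + 1) ω) ∂μ = ∫⁻ ω, H (fun n => Y n ω) ∂μ := by
  obtain ⟨σ, hσ, hσN⟩ := exists_perm_eq_succ N
  rw [← hY.lintegral_comp_perm hmeas hσ hH]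
  exact lintegral_congr fun ω => hHN _ _ fun n hn => by rw [hσN n hn]
lemma Exchangeable.lintegral_ofReal_sum_ne_top (hY : Exchangeable μ Y)
    (hmeas : ∀ n, Measurable (Y n)) {g : β → ℝ} (hg : Measurable g) (hg₀ : ∀ b, 0 ≤ g b)
    (hfin : ∫⁻ ω, ENNReal.ofReal (g (Y 0 ω)) ∂μ ≠ ∞) (N : ℕ) :
    ∫⁻ ω, ENNReal.ofReal (∑ i ∈ range N, g (Y i ω)) ∂μ ≠ ∞ := by
  rw [lintegral_congr fun ω => ENNReal.ofReal_sum_of_nonneg fun i _ => hg₀ (Y i ω),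
    lintegral_finsetSum _ fun i _ => by have := hmeas i; fun_prop]
  exact ENNReal.sum_ne_top.2 fun i _ =>
    (hY.lintegral_comp_eq hmeas i hg.ennreal_ofReal).trans_ne hfin

theorem Exchangeable.maximal_ineq_finite (hY : Exchangeable μ Y) (hmeas : ∀ n, Measurable (Y n))
    {g : β → ℝ} (hg : Measurable g) (hg₀ : ∀ b, 0 ≤ g b) {t : ℝ} (ht : 0 ≤ t) (N : ℕ) :
    ENNReal.ofReal t * μ {ω | ∃ n, 1 ≤ n ∧ n ≤ N ∧ n * t ≤ ∑ i ∈ range n, g (Y i ω)} ≤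
      ∫⁻ ω, ENNReal.ofReal (g (Y 0 ω)) ∂μ := by
  set E := {ω | ∃ n, 1 ≤ n ∧ n ≤ N ∧ n * t ≤ ∑ i ∈ range n, g (Y i ω)}
  set F : (ℕ → β) → ℝ≥0∞ := fun y => ENNReal.ofReal (maxExcess t N fun i => g (y i))
  have hF : Measurable F := by unfold F maxExcess excess; fun_prop
  have hFY : Measurable fun ω => F fun n => Y (n + 1) ω :=
    hF.comp (measurable_pi_lambda _ fun n => hmeas (n + 1))
  have hE : MeasurableSet E := by measurability
  have hpoint : ∀ ω, F (fun n => Y n ω) + E.indicator (fun _ => ENNReal.ofReal t) ω ≤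
      E.indicator (fun ω => ENNReal.ofReal (g (Y 0 ω))) ω + F (fun n => Y (n + 1) ω) := by
    intro ω
    by_cases hω : ω ∈ E
    · rw [Set.indicator_of_mem hω, Set.indicator_of_mem hω,
        ← ENNReal.ofReal_add maxExcess_nonneg ht, ← ENNReal.ofReal_add (hg₀ _) maxExcess_nonneg]
      exact ENNReal.ofReal_le_ofReal (by linarith [maxExcess_le_of_exists hω])
    · simp [F, Set.indicator_of_notMem hω, maxExcess_eq_zero_of_not_exists hω]
  have hshift : ∫⁻ ω, F (fun n => Y (n + 1) ω) ∂μ = ∫⁻ ω, F (fun n => Y n ω) ∂μ :=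
    hY.lintegral_comp_shift hmeas (N := N) hF fun x y hxy => by
      simp only [F, maxExcess_congr (t := t) fun i hi => congrArg g (hxy i hi)]
  have hbound : ∫⁻ ω, F (fun n => Y n ω) ∂μ + ENNReal.ofReal t * μ E ≤
      ∫⁻ ω, F (fun n => Y n ω) ∂μ + ∫⁻ ω, ENNReal.ofReal (g (Y 0 ω)) ∂μ :=
    calc ∫⁻ ω, F (fun n => Y n ω) ∂μ + ENNReal.ofReal t * μ E
        = ∫⁻ ω, F (fun n => Y n ω) + E.indicator (fun _ => ENNReal.ofReal t) ω ∂μ := by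
          rw [lintegral_add_right _ (measurable_const.indicator hE), lintegral_indicator_const hE]
      _ ≤ ∫⁻ ω, E.indicator (fun ω => ENNReal.ofReal (g (Y 0 ω))) ω + F (fun n => Y (n + 1) ω) ∂μ :=
          lintegral_mono hpoint
      _ ≤ ∫⁻ ω, F (fun n => Y n ω) ∂μ + ∫⁻ ω, ENNReal.ofReal (g (Y 0 ω)) ∂μ := by
          rw [lintegral_add_right _ hFY, lintegral_indicator hE, hshift, add_comm]
          gcongr
          exact Measure.restrict_le_self
  by_cases htop : ∫⁻ ω, ENNReal.ofReal (g (Y 0 ω)) ∂μ = ∞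
  · simp [htop]
  refine ENNReal.le_of_add_le_add_left (ne_top_of_le_ne_top
    (hY.lintegral_ofReal_sum_ne_top hmeas hg hg₀ htop N) (lintegral_mono fun ω =>
      ENNReal.ofReal_le_ofReal (maxExcess_le_sum ht fun i => hg₀ (Y i ω)))) hbound

theorem Exchangeable.maximal_ineq (hY : Exchangeable μ Y) (hmeas : ∀ n, Measurable (Y n))
    {g : β → ℝ} (hg : Measurable g) (hg₀ : ∀ b, 0 ≤ g b) {t : ℝ} (ht : 0 ≤ t) :
    ENNReal.ofReal t * μ {ω | ∃ n, 1 ≤ n ∧ n * t ≤ ∑ i ∈ range n, g (Y i ω)} ≤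
      ∫⁻ ω, ENNReal.ofReal (g (Y 0 ω)) ∂μ := by
  have hunion : {ω | ∃ n, 1 ≤ n ∧ n * t ≤ ∑ i ∈ range n, g (Y i ω)} =
      ⋃ N, {ω | ∃ n, 1 ≤ n ∧ n ≤ N ∧ n * t ≤ ∑ i ∈ range n, g (Y i ω)} := by
    ext ω
    simp only [Set.mem_ofPred_eq, Set.mem_iUnion]
    exact ⟨fun ⟨n, hn, h⟩ => ⟨n, n, hn, le_rfl, h⟩, fun ⟨_, n, hn, _, h⟩ => ⟨n, hn, h⟩⟩
  have hmono : Monotone fun N => {ω | ∃ n, 1 ≤ n ∧ n ≤ N ∧ n * t ≤ ∑ i ∈ range n, g (Y i ω)} :=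
    fun N N' hN _ ⟨n, hn, hnN, h⟩ => ⟨n, hn, hnN.trans hN, h⟩
  rw [hunion, hmono.measure_iUnion, ENNReal.mul_iSup]
  exact iSup_le (hY.maximal_ineq_finite hmeas hg hg₀ ht)

end Exchangeable

section Moments

variable {d : ℕ}

lemma trace_matCFC_abs_rpow_nonneg (p : ℝ) (A : Matrix (Fin d) (Fin d) ℝ) :
    0 ≤ (matCFC (fun x => |x| ^ p) A).trace := by
  by_cases hA : A.IsHermitian
  · rw [trace_matCFC _ hA]
    exact sum_nonneg fun i _ => Real.rpow_nonneg (abs_nonneg _) p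
  · rw [trace_matCFC_of_not_isHermitian _ hA]

lemma rpow_le_trace_matCFC_abs_rpow {p a : ℝ} (hp : 0 ≤ p) (ha : 0 < a)
    {A : Matrix (Fin d) (Fin d) ℝ} (hA : A.IsHermitian) (h : a ≤ specNorm A) :
    a ^ p ≤ (matCFC (fun x => |x| ^ p) A).trace := by
  rw [specNorm, dif_pos hA] at h
  cases isEmpty_or_nonempty (Fin d)
  · rw [Real.iSup_of_isEmpty] at h
    linarith
  obtain ⟨i, hi⟩ := exists_eq_ciSup_of_finite (f := fun i => |hA.eigenvalues i|)
  rw [trace_matCFC _ hA]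
  calc a ^ p ≤ |hA.eigenvalues i| ^ p := Real.rpow_le_rpow ha.le (hi ▸ h) hp
    _ ≤ ∑ j, |hA.eigenvalues j| ^ p :=
        single_le_sum (fun j _ => Real.rpow_nonneg (abs_nonneg _) p) (mem_univ i)

variable {Ω : Type*} {m0 : MeasurableSpace Ω} {μ : Measure Ω}

lemma isHermitian_matExpect {X : Ω → Matrix (Fin d) (Fin d) ℝ} (hX : ∀ ω, (X ω).IsHermitian) :
    (matExpect μ X).IsHermitian :=
  IsHermitian.ext fun i j => by
    simp only [matExpect, of_apply, star_trivial]
    exact integral_congr_ae (ae_of_all _ fun ω => by simpa using (hX ω).apply i j)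

lemma trace_matExpect {X : Ω → Matrix (Fin d) (Fin d) ℝ}
    (hX : ∀ i, Integrable (fun ω => X ω i i) μ) :
    (matExpect μ X).trace = ∫ ω, (X ω).trace ∂μ := by
  simp only [trace, Matrix.diag, matExpect, of_apply]
  exact (integral_finsetSum _ fun i _ => hX i).symm

end Moments

theorem stmt18_general {Ω : Type*} {m0 : MeasurableSpace Ω} (μ : Measure Ω)
    {d : ℕ} (p : ℝ) (hp : 1 ≤ p)
    (X : ℕ → Ω → Matrix (Fin d) (Fin d) ℝ)
    (hmeas : ∀ n, Measurable (X n))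
    (hsymm : ∀ n ω, (X n ω).IsHermitian)
    (hexch : MatExchangeable μ X)
    (M Vp : Matrix (Fin d) (Fin d) ℝ)
    (hM : matExpect μ (X 0) = M)
    (hVpint : ∀ i j, Integrable (fun ω => matCFC (fun x => |x| ^ p) (X 0 ω - M) i j) μ)
    (hVp : matExpect μ (fun ω => matCFC (fun x => |x| ^ p) (X 0 ω - M)) = Vp)
    (a : ℝ) (ha : 0 < a) :
    μ {ω | ∃ n : ℕ, 1 ≤ n ∧
        a ≤ specNorm ((n : ℝ)⁻¹ • ∑ i ∈ Finset.range n, X i ω - M)} ≤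
      μ {ω | ∃ n : ℕ, 1 ≤ n ∧
        a ^ p ≤ (matCFC (fun x => |x| ^ p)
          ((n : ℝ)⁻¹ • ∑ i ∈ Finset.range n, X i ω - M)).trace} ∧
    μ {ω | ∃ n : ℕ, 1 ≤ n ∧
        a ^ p ≤ (matCFC (fun x => |x| ^ p)
          ((n : ℝ)⁻¹ • ∑ i ∈ Finset.range n, X i ω - M)).trace} ≤
      ENNReal.ofReal (a ^ (-p) * Vp.trace) := by
  have hMherm : M.IsHermitian := hM ▸ isHermitian_matExpect (hsymm 0)
  set g : Matrix (Fin d) (Fin d) ℝ → ℝ := fun A => (matCFC (fun x => |x| ^ p) (A - M)).trace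
  have hg : Measurable g := (measurable_trace_matCFC
    (continuous_abs.rpow_const fun _ => Or.inr (by linarith))).comp (measurable_id.sub_const M)
  have hg₀ : ∀ A, 0 ≤ g A := fun A => trace_matCFC_abs_rpow_nonneg p _
  have hVp_trace : ∫⁻ ω, ENNReal.ofReal (g (X 0 ω)) ∂μ = ENNReal.ofReal Vp.trace := by
    have hint : Integrable (fun ω => g (X 0 ω)) μ := integrable_finsetSum _ fun i _ => hVpint i i
    rw [← ofReal_integral_eq_lintegral_ofReal hint (ae_of_all _ fun ω => hg₀ _), ← hVp,
      trace_matExpect fun i => hVpint i i]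
  have hmax := Exchangeable.maximal_ineq hexch hmeas hg hg₀ (t := a ^ p) (by positivity)
  rw [hVp_trace, mul_comm] at hmax
  refine ⟨measure_mono fun ω ⟨n, hn, h⟩ => ⟨n, hn, rpow_le_trace_matCFC_abs_rpow (by linarith) ha
    (isHermitian_inv_smul_sum_sub (fun i => hsymm i ω) hMherm) h⟩, ?_⟩
  calc _ ≤ μ {ω | ∃ n, 1 ≤ n ∧ n * a ^ p ≤ ∑ i ∈ range n, g (X i ω)} := by
        refine measure_mono fun ω ⟨n, hn, h⟩ => ⟨n, hn, (le_inv_mul_iff₀ (by positivity)).1 ?_⟩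
        exact h.trans <| (convexOn_abs_rpow hp).trace_matCFC_inv_smul_sum_sub_le (by omega)
          (fun i => hsymm i ω) hMherm
    _ ≤ ENNReal.ofReal Vp.trace / ENNReal.ofReal (a ^ p) :=
        (ENNReal.le_div_iff_mul_le (Or.inl (ENNReal.ofReal_pos.2 (by positivity)).ne')
          (Or.inl ENNReal.ofReal_ne_top)).2 hmax
    _ = ENNReal.ofReal (a ^ (-p) * Vp.trace) := by
        rw [← ENNReal.ofReal_div_of_pos (by positivity), Real.rpow_neg ha.le, div_eq_inv_mul]

/-- **Exchangeable matrix p-Chebyshev trace inequality.**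
For `p ≥ 1`, an exchangeable sequence of random symmetric matrices with mean `M` and central
p-th moment `V_p = E[(abs(X₁ - M))^p]`, and any `a > 0`:
`P(∃ n ≥ 1, ‖X̄ₙ - M‖_op ≥ a) ≤ P(∃ n ≥ 1, tr((abs(X̄ₙ - M))^p) ≥ a^p) ≤ a^{-p} tr(V_p)`. -/
theorem stmt18 {Ω : Type*} {m0 : MeasurableSpace Ω} (μ : Measure Ω) [IsProbabilityMeasure μ]
    {d : ℕ} (p : ℝ) (hp : 1 ≤ p)
    (X : ℕ → Ω → Matrix (Fin d) (Fin d) ℝ)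
    (hmeas : ∀ n, Measurable (X n))
    (hsymm : ∀ n ω, (X n ω).IsHermitian)
    (hexch : MatExchangeable μ X)
    (M Vp : Matrix (Fin d) (Fin d) ℝ)
    (hM : matExpect μ (X 0) = M)
    (hVpint : ∀ i j, Integrable (fun ω => matCFC (fun x => |x| ^ p) (X 0 ω - M) i j) μ)
    (hVp : matExpect μ (fun ω => matCFC (fun x => |x| ^ p) (X 0 ω - M)) = Vp)
    (a : ℝ) (ha : 0 < a) :
    μ {ω | ∃ n : ℕ, 1 ≤ n ∧
        a ≤ specNorm ((n : ℝ)⁻¹ • ∑ i ∈ Finset.range n, X i ω - M)} ≤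
      μ {ω | ∃ n : ℕ, 1 ≤ n ∧
        a ^ p ≤ (matCFC (fun x => |x| ^ p)
          ((n : ℝ)⁻¹ • ∑ i ∈ Finset.range n, X i ω - M)).trace} ∧
    μ {ω | ∃ n : ℕ, 1 ≤ n ∧
        a ^ p ≤ (matCFC (fun x => |x| ^ p)
          ((n : ℝ)⁻¹ • ∑ i ∈ Finset.range n, X i ω - M)).trace} ≤
      ENNReal.ofReal (a ^ (-p) * Vp.trace) :=
  stmt18_general (m0 := m0) μ p hp X hmeas hsymm hexch M Vp hM hVpint hVp a ha

end
end
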